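/- Let T > 0 and let (u,ρ) be a classical solution of the π-Camassa–Holm system on [0,T)×𝕊. Assume that the quantity H(t) = ∫_𝕊 (u(t,x)² + ∂ₓu(t,x)² + π(ρ)(t,x)²) dx is independent of t ∈ [0,T). If there is a nonempty open set Ω ⊆ (0,T)×𝕊 on which both u and π(ρ) vanish identically, then u(t,x) = 0 and π(ρ)(t,x) = 0 for all (t,x) ∈ [0,T)×𝕊. -/

import Mathlib

/-!
Pick `(t₀, x₀) ∈ Ω`. Near `x₀` the time slice `u(t₀)` vanishes, and so does `∂ₜu(t₀)`, so the
equation for `u` forces `∂ₓΛ⁻²w = 0` near `x₀`, where `w = u² + ½uₓ² + ½π(ρ)²` at time `t₀`.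
Differentiating once more, `∂ₓ²Λ⁻²w = Λ⁻²w - w` gives `Λ⁻²w(x₀) = w(x₀) = 0`. The Helmholtz
kernel is bounded below by `1 / (2 sinh ½) > 0` and `w ≥ 0`, so `∫_𝕊 w = 0`; since the density
of `H` is at most `2w`, `H(t₀) = 0`. By conservation `H ≡ 0`, which forces `u ≡ 0` and
`π(ρ) ≡ 0` at every time.
-/

open MeasureTheory Set intervalIntegral

/-- The inverse Helmholtz operator `Λ⁻² = (1 - ∂ₓ²)⁻¹` on the circle `𝕊 = ℝ/ℤ`
(modelled by 1-periodic functions on `ℝ`), given by convolution with the periodic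
kernel `G(x) = cosh(x - ⌊x⌋ - 1/2)/(2 sinh(1/2))`. -/
noncomputable def lam2S (w : ℝ → ℝ) (x : ℝ) : ℝ :=
  ∫ y in (0:ℝ)..1,
    (Real.cosh ((x - y) - ⌊x - y⌋ - 1/2) / (2 * Real.sinh (1/2))) * w y

/-- The projection `π(ρ) = ρ - ∫_𝕊 ρ dx` on the circle (modelled on `[0,1)`). -/
noncomputable def piS (r : ℝ → ℝ) (x : ℝ) : ℝ := r x - ∫ y in (0:ℝ)..1, r y

open Filter Topology

section Helmholtz

open Real

variable {w : ℝ → ℝ}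

theorem hasDerivAt_integral_sub_left_self {g : ℝ → ℝ} (hg : Continuous g) (L x : ℝ) :
    HasDerivAt (fun t => ∫ y in (t - L)..t, g y) (g x - g (x - L)) x := by
  have hsplit : (fun t => ∫ y in (t - L)..t, g y) =
      fun t => (∫ y in (0:ℝ)..t, g y) - ∫ y in (0:ℝ)..(t - L), g y := by
    funext t
    rw [integral_interval_sub_left (hg.intervalIntegrable _ _) (hg.intervalIntegrable _ _)]
  rw [hsplit]
  exact (hg.integral_hasStrictDerivAt 0 x).hasDerivAt.sub
    ((hg.integral_hasStrictDerivAt 0 (x - L)).hasDerivAt.comp_sub_const x L)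

/-- The two exponential halves of `Λ⁻²w`, as integrals over the window `[x - 1, x]`,
on which the kernel `G(x - y)` is `cosh (x - y - 1/2) / (2 sinh (1/2))`. -/
noncomputable def expWindow (c : ℝ) (w : ℝ → ℝ) (x : ℝ) : ℝ :=
  ∫ y in (x - 1)..x, exp (c * (x - y - 1/2)) * w y

theorem hasDerivAt_expWindow (hw : Continuous w) (hper : Function.Periodic w 1) (c x : ℝ) :
    HasDerivAt (expWindow c w) (c * expWindow c w x - 2 * sinh (c / 2) * w x) x := by
  have hfactor : expWindow c w =
      fun x => exp (c * (x - 1/2)) * ∫ y in (x - 1)..x, exp (-(c * y)) * w y := by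
    funext x
    rw [expWindow, ← intervalIntegral.integral_const_mul]
    congr 1
    funext y
    rw [← mul_assoc, ← exp_add]
    ring_nf
  have hexp : HasDerivAt (fun x => exp (c * (x - 1/2))) (exp (c * (x - 1/2)) * c) x := by
    simpa only [id, mul_one] using (((hasDerivAt_id x).sub_const (1/2)).const_mul c).exp
  have hint := hasDerivAt_integral_sub_left_self
    (by fun_prop : Continuous fun y => exp (-(c * y)) * w y) 1 x
  rw [hfactor]
  refine (hexp.mul hint).congr_deriv ?_
  have e₁ : exp (c * (x - 1/2)) * exp (-(c * x)) = exp (-(c / 2)) := by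
    rw [← exp_add]; ring_nf
  have e₂ : exp (c * (x - 1/2)) * exp (-(c * (x - 1))) = exp (c / 2) := by
    rw [← exp_add]; ring_nf
  rw [hper.sub_eq, sinh_eq]
  linear_combination (w x) * e₁ - (w x) * e₂

theorem lam2S_eq_integral_window (hper : Function.Periodic w 1) (x : ℝ) :
    lam2S w x = ∫ y in (x - 1)..x, cosh (x - y - 1/2) / (2 * sinh (1/2)) * w y := by
  have hkper : Function.Periodic
      (fun y => cosh (x - y - ⌊x - y⌋ - 1/2) / (2 * sinh (1/2)) * w y) 1 := fun y => by
    simp only [Int.self_sub_floor, hper y, show x - (y + 1) = x - y - 1 by ring,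
      Int.fract_sub_one]
  have hshift := hkper.intervalIntegral_add_eq (x - 1) 0
  rw [sub_add_cancel, zero_add] at hshift
  rw [lam2S, ← hshift]
  refine integral_congr_ae (Eventually.of_forall fun y hy => ?_)
  rw [uIoc_of_le (by linarith)] at hy
  have hfloor : ⌊x - y⌋ = 0 :=
    Int.floor_eq_zero_iff.mpr ⟨by linarith [hy.2], by linarith [hy.1]⟩
  simp [hfloor]

theorem lam2S_eq_expWindow (hw : Continuous w) (hper : Function.Periodic w 1) (x : ℝ) :
    lam2S w x = (expWindow 1 w x + expWindow (-1) w x) / (4 * sinh (1/2)) := by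
  have hint (c : ℝ) :
      IntervalIntegrable (fun y => exp (c * (x - y - 1/2)) * w y) volume (x - 1) x :=
    (by fun_prop : Continuous fun y => exp (c * (x - y - 1/2)) * w y).intervalIntegrable _ _
  rw [lam2S_eq_integral_window hper, expWindow, expWindow, ← integral_add (hint 1) (hint (-1)),
    ← intervalIntegral.integral_div]
  congr 1
  funext y
  rw [cosh_eq]
  ring_nf

theorem hasDerivAt_lam2S (hw : Continuous w) (hper : Function.Periodic w 1) (x : ℝ) :
    HasDerivAt (lam2S w) ((expWindow 1 w x - expWindow (-1) w x) / (4 * sinh (1/2))) x := by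
  rw [show lam2S w = _ from funext (lam2S_eq_expWindow hw hper)]
  refine (((hasDerivAt_expWindow hw hper 1 x).add
    (hasDerivAt_expWindow hw hper (-1) x)).div_const (4 * sinh (1/2))).congr_deriv ?_
  -- the boundary terms `∓ 2 sinh (1/2) w x` of the two halves cancel
  rw [neg_div, sinh_neg]
  ring

theorem hasDerivAt_deriv_lam2S (hw : Continuous w) (hper : Function.Periodic w 1) (x : ℝ) :
    HasDerivAt (deriv (lam2S w)) (lam2S w x - w x) x := by
  rw [show deriv (lam2S w) = _ from funext fun x => (hasDerivAt_lam2S hw hper x).deriv,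
    lam2S_eq_expWindow hw hper]
  refine (((hasDerivAt_expWindow hw hper 1 x).sub
    (hasDerivAt_expWindow hw hper (-1) x)).div_const (4 * sinh (1/2))).congr_deriv ?_
  have : sinh (1/2) ≠ 0 := (sinh_pos_iff.mpr (by norm_num)).ne'
  rw [neg_div, sinh_neg]
  field_simp
  ring

theorem lam2S_eq_of_deriv_eventuallyEq_zero (hw : Continuous w) (hper : Function.Periodic w 1)
    {x : ℝ} (h : deriv (lam2S w) =ᶠ[𝓝 x] 0) : lam2S w x = w x :=
  sub_eq_zero.mp <|
    ((hasDerivAt_deriv_lam2S hw hper x).congr_of_eventuallyEq h.symm).unique (hasDerivAt_const x 0)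

theorem integral_div_le_lam2S (hw : Continuous w) (hper : Function.Periodic w 1)
    (hnn : ∀ y, 0 ≤ w y) (x : ℝ) :
    (∫ y in (0:ℝ)..1, w y) / (2 * sinh (1/2)) ≤ lam2S w x := by
  have hshift := hper.intervalIntegral_add_eq (x - 1) 0
  rw [sub_add_cancel, zero_add] at hshift
  rw [lam2S_eq_integral_window hper, ← hshift, ← intervalIntegral.integral_div]
  refine integral_mono_on (by linarith) ((hw.div_const _).intervalIntegrable _ _)
    ((by fun_prop : Continuous fun y => cosh (x - y - 1/2) / (2 * sinh (1/2)) * w y)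
      |>.intervalIntegrable _ _)
    fun y _ => ?_
  have : 0 < sinh (1/2) := sinh_pos_iff.mpr (by norm_num)
  rw [div_mul_eq_mul_div]
  gcongr
  exact le_mul_of_one_le_left (hnn y) (one_le_cosh _)

end Helmholtz

theorem Function.Periodic.forall_eq_of_forall_mem_Ico {α β : Type*} [AddCommGroup α]
    [LinearOrder α] [IsOrderedAddMonoid α] [Archimedean α] {f : α → β} {c : α} {b : β}
    (hf : Function.Periodic f c) (hc : 0 < c) (h : ∀ x ∈ Ico 0 c, f x = b) (x : α) :
    f x = b := by
  obtain ⟨y, hy, hxy⟩ := hf.exists_mem_Ico₀ hc x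
  exact hxy.trans (h y hy)

theorem eqOn_zero_of_intervalIntegral_eq_zero {f : ℝ → ℝ} {a b : ℝ} (hab : a < b)
    (hf : ContinuousOn f (Icc a b)) (hnn : ∀ x ∈ Icc a b, 0 ≤ f x)
    (h : ∫ x in a..b, f x = 0) : EqOn f 0 (Icc a b) := by
  intro x hx
  by_contra hne
  have hlt := integral_lt_integral_of_continuousOn_of_le_of_exists_lt hab continuousOn_const hf
    (fun y hy => hnn y (Ioc_subset_Icc_self hy)) ⟨x, hx, (hnn x hx).lt_of_ne' hne⟩
  simp [h] at hlt

theorem deriv_slice_eq_zero {u : ℝ → ℝ → ℝ} {Ω : Set (ℝ × ℝ)} (hΩ : IsOpen Ω)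
    (hu : ∀ p ∈ Ω, u p.1 p.2 = 0) {t x : ℝ} (hp : (t, x) ∈ Ω) :
    deriv (fun s => u s x) t = 0 ∧ deriv (u t) x = 0 := by
  have hev : ∀ᶠ q in 𝓝 (t, x), u q.1 q.2 = 0 := Filter.eventually_of_mem (hΩ.mem_nhds hp) hu
  constructor
  · have htime : (fun s => u s x) =ᶠ[𝓝 t] fun _ => 0 :=
      hev.curry_nhds.mono fun _ hs => hs.self_of_nhds
    exact htime.deriv_eq.trans (deriv_const _ _)
  · have hspace : u t =ᶠ[𝓝 x] fun _ => 0 := hev.curry_nhds.self_of_nhds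
    exact hspace.deriv_eq.trans (deriv_const _ _)

section Slice

open Real Function

variable {v r : ℝ → ℝ}

theorem periodic_deriv {𝕜 F : Type*} [NontriviallyNormedField 𝕜] [NormedAddCommGroup F]
    [NormedSpace 𝕜 F] {f : 𝕜 → F} {c : 𝕜} (hf : Periodic f c) : Periodic (deriv f) c :=
  fun y => by rw [← deriv_comp_add_const, show (fun x => f (x + c)) = f from funext hf]

theorem periodic_piS (hr : Periodic r 1) : Periodic (piS r) 1 :=
  fun y => by rw [piS, piS, hr y]

theorem continuous_piS (hr : Continuous r) : Continuous (piS r) :=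
  hr.sub continuous_const

/-- The density of the conserved quantity `H`. -/
noncomputable def energyDensity (v r : ℝ → ℝ) (y : ℝ) : ℝ :=
  v y ^ 2 + deriv v y ^ 2 + piS r y ^ 2

/-- The function to which `Λ⁻²` is applied in the equation for `u`. -/
noncomputable def nonlocalSource (v r : ℝ → ℝ) (y : ℝ) : ℝ :=
  v y ^ 2 + 1/2 * deriv v y ^ 2 + 1/2 * piS r y ^ 2

theorem energyDensity_nonneg (y : ℝ) : 0 ≤ energyDensity v r y := by
  unfold energyDensity; positivity

theorem nonlocalSource_nonneg (y : ℝ) : 0 ≤ nonlocalSource v r y := by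
  unfold nonlocalSource; positivity

theorem energyDensity_le_two_mul_nonlocalSource (y : ℝ) :
    energyDensity v r y ≤ 2 * nonlocalSource v r y := by
  unfold energyDensity nonlocalSource; nlinarith [sq_nonneg (v y)]

theorem continuous_energyDensity (hv : ContDiff ℝ 1 v) (hr : Continuous r) :
    Continuous (energyDensity v r) := by
  have := hv.continuous_deriv le_rfl
  have := continuous_piS hr
  unfold energyDensity; fun_prop

theorem continuous_nonlocalSource (hv : ContDiff ℝ 1 v) (hr : Continuous r) :
    Continuous (nonlocalSource v r) := by
  have := hv.continuous_deriv le_rfl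
  have := continuous_piS hr
  unfold nonlocalSource; fun_prop

theorem periodic_nonlocalSource (hv : Periodic v 1) (hr : Periodic r 1) :
    Periodic (nonlocalSource v r) 1 :=
  fun y => by rw [nonlocalSource, nonlocalSource, hv y, periodic_deriv hv y, periodic_piS hr y]

theorem integral_energyDensity_eq_zero_of_lam2S_eq_zero (hv : ContDiff ℝ 1 v) (hr : Continuous r)
    (hvper : Periodic v 1) (hrper : Periodic r 1) {x : ℝ} (h : lam2S (nonlocalSource v r) x = 0) :
    ∫ y in (0:ℝ)..1, energyDensity v r y = 0 := by
  have hsource : ∫ y in (0:ℝ)..1, nonlocalSource v r y = 0 := by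
    have hlow := integral_div_le_lam2S (continuous_nonlocalSource hv hr)
      (periodic_nonlocalSource hvper hrper) nonlocalSource_nonneg x
    have : 0 < 2 * sinh (1/2) := by linarith [sinh_pos_iff.mpr (by norm_num : (0:ℝ) < 1/2)]
    rw [h, div_le_iff₀ this, zero_mul] at hlow
    exact le_antisymm hlow (integral_nonneg zero_le_one fun y _ => nonlocalSource_nonneg y)
  refine le_antisymm ?_ (integral_nonneg zero_le_one fun y _ => energyDensity_nonneg y)
  calc ∫ y in (0:ℝ)..1, energyDensity v r y
      ≤ ∫ y in (0:ℝ)..1, 2 * nonlocalSource v r y :=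
        integral_mono_on zero_le_one ((continuous_energyDensity hv hr).intervalIntegrable _ _)
          ((continuous_const.mul (continuous_nonlocalSource hv hr)).intervalIntegrable _ _)
          fun y _ => energyDensity_le_two_mul_nonlocalSource y
    _ = 0 := by rw [intervalIntegral.integral_const_mul, hsource, mul_zero]

theorem eq_zero_of_integral_energyDensity_eq_zero (hv : ContDiff ℝ 1 v) (hr : Continuous r)
    (hvper : Periodic v 1) (hrper : Periodic r 1) (h : ∫ y in (0:ℝ)..1, energyDensity v r y = 0)
    (x : ℝ) : v x = 0 ∧ piS r x = 0 := by
  have hzero := eqOn_zero_of_intervalIntegral_eq_zero one_pos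
    (continuous_energyDensity hv hr).continuousOn (fun y _ => energyDensity_nonneg y) h
  have hIco (y : ℝ) (hy : y ∈ Ico 0 1) : v y = 0 ∧ piS r y = 0 := by
    have hy0 : energyDensity v r y = 0 := hzero (Ico_subset_Icc_self hy)
    unfold energyDensity at hy0
    have := sq_nonneg (v y)
    have := sq_nonneg (deriv v y)
    have := sq_nonneg (piS r y)
    exact ⟨pow_eq_zero_iff two_ne_zero |>.mp (by linarith),
      pow_eq_zero_iff two_ne_zero |>.mp (by linarith)⟩
  exact ⟨hvper.forall_eq_of_forall_mem_Ico one_pos (fun y hy => (hIco y hy).1) x,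
    (periodic_piS hrper).forall_eq_of_forall_mem_Ico one_pos (fun y hy => (hIco y hy).2) x⟩

end Slice

theorem piCamassaHolm_unique_continuation_general (T : ℝ)
    (u ρ : ℝ → ℝ → ℝ)
    -- functions on the circle: 1-periodic in x
    (huper : ∀ t ∈ Set.Ico (0:ℝ) T, Function.Periodic (u t) 1)
    (hρper : ∀ t ∈ Set.Ico (0:ℝ) T, Function.Periodic (ρ t) 1)
    -- regularity in x
    (hureg : ∀ t ∈ Set.Ico (0:ℝ) T, ContDiff ℝ 2 (u t))
    (hρreg : ∀ t ∈ Set.Ico (0:ℝ) T, ContDiff ℝ 1 (ρ t))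
    -- the π-Camassa-Holm system holds pointwise on (0,T) × 𝕊
    (heq1 : ∀ t ∈ Set.Ioo (0:ℝ) T, ∀ x : ℝ,
      deriv (fun s => u s x) t + u t x * deriv (u t) x =
        -(deriv (lam2S (fun y =>
          (u t y)^2 + (1/2) * (deriv (u t) y)^2 + (1/2) * (piS (ρ t) y)^2)) x))
    -- conserved quantity H(t) = ∫_𝕊 (u² + uₓ² + π(ρ)²) dx
    (hcons : ∃ c : ℝ, ∀ t ∈ Set.Ico (0:ℝ) T,
      (∫ x in (0:ℝ)..1, ((u t x)^2 + (deriv (u t) x)^2 + (piS (ρ t) x)^2)) = c)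
    -- nonempty open set on which u and π(ρ) vanish identically
    (Ω : Set (ℝ × ℝ)) (hΩopen : IsOpen Ω) (hΩne : Ω.Nonempty)
    (hΩsub : Ω ⊆ Set.Ioo (0:ℝ) T ×ˢ Set.univ)
    (hvanu : ∀ p ∈ Ω, u p.1 p.2 = 0)
    (hvanπ : ∀ p ∈ Ω, piS (ρ p.1) p.2 = 0) :
    ∀ t ∈ Set.Ico (0:ℝ) T, ∀ x : ℝ, u t x = 0 ∧ piS (ρ t) x = 0 := by
  obtain ⟨⟨t₀, x₀⟩, hp⟩ := hΩne
  have ht₀ : t₀ ∈ Ioo 0 T := (hΩsub hp).1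
  have ht₀' : t₀ ∈ Ico 0 T := Ioo_subset_Ico_self ht₀
  have hu₀ : ContDiff ℝ 1 (u t₀) := (hureg t₀ ht₀').of_le one_le_two
  have hρ₀ : Continuous (ρ t₀) := (hρreg t₀ ht₀').continuous
  have hderiv_lam2S : deriv (lam2S (nonlocalSource (u t₀) (ρ t₀))) =ᶠ[𝓝 x₀] 0 := by
    filter_upwards [(hΩopen.eventually_mem hp).curry_nhds.self_of_nhds] with x hx
    have heq := heq1 t₀ ht₀ x
    rw [(deriv_slice_eq_zero hΩopen hvanu hx).1, hvanu _ hx, zero_mul, zero_add,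
      zero_eq_neg] at heq
    exact heq
  have hlam2S : lam2S (nonlocalSource (u t₀) (ρ t₀)) x₀ = 0 := by
    rw [lam2S_eq_of_deriv_eventuallyEq_zero (continuous_nonlocalSource hu₀ hρ₀)
      (periodic_nonlocalSource (huper t₀ ht₀') (hρper t₀ ht₀')) hderiv_lam2S]
    simp [nonlocalSource, hvanu _ hp, (deriv_slice_eq_zero hΩopen hvanu hp).2, hvanπ _ hp]
  have hH₀ := integral_energyDensity_eq_zero_of_lam2S_eq_zero hu₀ hρ₀
    (huper t₀ ht₀') (hρper t₀ ht₀') hlam2S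
  obtain ⟨c, hc⟩ := hcons
  intro t ht
  exact eq_zero_of_integral_energyDensity_eq_zero ((hureg t ht).of_le one_le_two)
    (hρreg t ht).continuous (huper t ht) (hρper t ht)
    ((hc t ht).trans ((hc t₀ ht₀').symm.trans hH₀))

/-- **Unique continuation for the π-Camassa-Holm system (section 3.4).**
A classical solution `(u,ρ)` of the π-Camassa-Holm system on `[0,T) × 𝕊`
(functions on the circle are modelled as 1-periodic functions on `ℝ`), whose
quantity `H(t) = ∫_𝕊 (u² + uₓ² + π(ρ)²) dx` is conserved, and such that `u` and
`π(ρ)` vanish identically on a nonempty open set `Ω ⊆ (0,T) × 𝕊`, satisfies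
`u ≡ 0` and `π(ρ) ≡ 0` on `[0,T) × 𝕊`. -/
theorem piCamassaHolm_unique_continuation (T : ℝ) (hT : 0 < T)
    (u ρ : ℝ → ℝ → ℝ)
    -- functions on the circle: 1-periodic in x
    (huper : ∀ t ∈ Set.Ico (0:ℝ) T, Function.Periodic (u t) 1)
    (hρper : ∀ t ∈ Set.Ico (0:ℝ) T, Function.Periodic (ρ t) 1)
    -- regularity in x
    (hureg : ∀ t ∈ Set.Ico (0:ℝ) T, ContDiff ℝ 2 (u t))
    (hρreg : ∀ t ∈ Set.Ico (0:ℝ) T, ContDiff ℝ 1 (ρ t))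
    -- time derivatives exist on (0,T) × 𝕊
    (hut : ∀ t ∈ Set.Ioo (0:ℝ) T, ∀ x : ℝ, DifferentiableAt ℝ (fun s => u s x) t)
    (hρt : ∀ t ∈ Set.Ioo (0:ℝ) T, ∀ x : ℝ, DifferentiableAt ℝ (fun s => ρ s x) t)
    -- the π-Camassa-Holm system holds pointwise on (0,T) × 𝕊
    (heq1 : ∀ t ∈ Set.Ioo (0:ℝ) T, ∀ x : ℝ,
      deriv (fun s => u s x) t + u t x * deriv (u t) x =
        -(deriv (lam2S (fun y =>
          (u t y)^2 + (1/2) * (deriv (u t) y)^2 + (1/2) * (piS (ρ t) y)^2)) x))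
    (heq2 : ∀ t ∈ Set.Ioo (0:ℝ) T, ∀ x : ℝ,
      deriv (fun s => piS (ρ s) x) t + u t x * deriv (ρ t) x =
        -(piS (ρ t) x * deriv (u t) x))
    -- conserved quantity H(t) = ∫_𝕊 (u² + uₓ² + π(ρ)²) dx
    (hcons : ∃ c : ℝ, ∀ t ∈ Set.Ico (0:ℝ) T,
      (∫ x in (0:ℝ)..1, ((u t x)^2 + (deriv (u t) x)^2 + (piS (ρ t) x)^2)) = c)
    -- nonempty open set on which u and π(ρ) vanish identically
    (Ω : Set (ℝ × ℝ)) (hΩopen : IsOpen Ω) (hΩne : Ω.Nonempty)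
    (hΩsub : Ω ⊆ Set.Ioo (0:ℝ) T ×ˢ Set.univ)
    (hvanu : ∀ p ∈ Ω, u p.1 p.2 = 0)
    (hvanπ : ∀ p ∈ Ω, piS (ρ p.1) p.2 = 0) :
    ∀ t ∈ Set.Ico (0:ℝ) T, ∀ x : ℝ, u t x = 0 ∧ piS (ρ t) x = 0 :=
  piCamassaHolm_unique_continuation_general T u ρ huper hρper hureg hρreg heq1 hcons Ω hΩopen hΩne
    hΩsub hvanu hvanπ
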